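/- arXiv:2303.03635 — 2 statements merged into one kernel-verified Lean document; each statement's English description precedes it below -/
import Mathlib

section
/- Let a ≤ b be real numbers, let U ⊆ ℝⁿ be a convex set, let C₁ : ℝⁿ → ℝᵐ be a linear map, and let C₂ : ℝ → (ℝⁿ → ℝ) assign to each ψ ∈ ℝ a linear functional on ℝⁿ such that for every u ∈ U the scalar map ψ ↦ C₂(ψ)(u) is continuous and monotone nondecreasing on [a, b]. Let τ ≥ 0, x̄₀ ∈ ℝᵐ, θ₀ ∈ ℝ, and let c ≤ d be real numbers. Define S₁ = { (x̄₀ + τ·C₁(u), θ₀ + τ·C₂(ψ)(u)) : ψ ∈ [a, b], u ∈ U } ⊆ ℝᵐ × ℝ and S₂ = { ψ + τ·ω : ψ ∈ [a, b], ω ∈ [c, d] } ⊆ ℝ. Then the Cartesian product S₁ × S₂ ⊆ (ℝᵐ × ℝ) × ℝ is a convex set. (This is Proposition 1 of the paper: the expanded set of approximate terminal states 𝒜𝒯_τ(x̄)_{ij}, obtained as the union over all contact-point locations ψ_c in the admissible interval of the linearized one-step terminal-state sets, is convex.) -/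
/-- Key intermediate-value step: assuming `ψ₁ ≤ ψ₂`, there is `ψ ∈ [a,b]` realizing
the convex combination of the two functional values. -/
lemma prop1_ivt_aux
    (n : ℕ) (a b : ℝ)
    (U : Set (Fin n → ℝ))
    (C₂ : ℝ → ((Fin n → ℝ) →ₗ[ℝ] ℝ))
    (hcont : ∀ u ∈ U, ContinuousOn (fun ψ => C₂ ψ u) (Set.Icc a b))
    (hmono : ∀ u ∈ U, MonotoneOn (fun ψ => C₂ ψ u) (Set.Icc a b))
    (ψ₁ ψ₂ : ℝ) (h₁ : ψ₁ ∈ Set.Icc a b) (h₂ : ψ₂ ∈ Set.Icc a b) (h12 : ψ₁ ≤ ψ₂)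
    (u₁ u₂ : Fin n → ℝ) (hu₁ : u₁ ∈ U) (hu₂ : u₂ ∈ U)
    (s t : ℝ) (hs : 0 ≤ s) (ht : 0 ≤ t) (hst : s + t = 1) :
    ∃ ψ ∈ Set.Icc a b,
      C₂ ψ (s • u₁ + t • u₂) = s * C₂ ψ₁ u₁ + t * C₂ ψ₂ u₂ := by
  have hsub : Set.Icc ψ₁ ψ₂ ⊆ Set.Icc a b :=
    Set.Icc_subset_Icc h₁.1 h₂.2
  have hfc : ContinuousOn (fun ψ => s * C₂ ψ u₁ + t * C₂ ψ u₂) (Set.Icc ψ₁ ψ₂) :=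
    (continuousOn_const.mul ((hcont u₁ hu₁).mono hsub)).add
      (continuousOn_const.mul ((hcont u₂ hu₂).mono hsub))
  have hm₂ : C₂ ψ₁ u₂ ≤ C₂ ψ₂ u₂ := hmono u₂ hu₂ h₁ h₂ h12
  have hm₁ : C₂ ψ₁ u₁ ≤ C₂ ψ₂ u₁ := hmono u₁ hu₁ h₁ h₂ h12
  have hlow : s * C₂ ψ₁ u₁ + t * C₂ ψ₁ u₂ ≤ s * C₂ ψ₁ u₁ + t * C₂ ψ₂ u₂ := by
    nlinarith
  have hhigh : s * C₂ ψ₁ u₁ + t * C₂ ψ₂ u₂ ≤ s * C₂ ψ₂ u₁ + t * C₂ ψ₂ u₂ := by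
    nlinarith
  obtain ⟨ψ, hψmem, hψval⟩ := intermediate_value_Icc h12 hfc ⟨hlow, hhigh⟩
  dsimp only at hψval
  refine ⟨ψ, hsub hψmem, ?_⟩
  simp only [map_add, map_smul, smul_eq_mul]
  linarith [hψval]

/-- Proposition 1 of the paper: the expanded set of approximate terminal states
`𝒜𝒯_τ(x̄)_{ij}` crossed with the terminal contact-angle set `S₂` is convex. -/
theorem prop1_expanded_terminal_set_prod_convex
    (n m : ℕ) (a b : ℝ) (hab : a ≤ b)
    (U : Set (Fin n → ℝ)) (hU : Convex ℝ U)
    (C₁ : (Fin n → ℝ) →ₗ[ℝ] (Fin m → ℝ))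
    (C₂ : ℝ → ((Fin n → ℝ) →ₗ[ℝ] ℝ))
    (hcont : ∀ u ∈ U, ContinuousOn (fun ψ => C₂ ψ u) (Set.Icc a b))
    (hmono : ∀ u ∈ U, MonotoneOn (fun ψ => C₂ ψ u) (Set.Icc a b))
    (τ : ℝ) (hτ : 0 ≤ τ) (x₀ : Fin m → ℝ) (θ₀ : ℝ)
    (c d : ℝ) (hcd : c ≤ d)
    (S₁ : Set ((Fin m → ℝ) × ℝ))
    (hS₁ : S₁ = {p | ∃ ψ ∈ Set.Icc a b, ∃ u ∈ U,
      p = (x₀ + τ • C₁ u, θ₀ + τ * C₂ ψ u)})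
    (S₂ : Set ℝ)
    (hS₂ : S₂ = {s | ∃ ψ ∈ Set.Icc a b, ∃ ω ∈ Set.Icc c d, s = ψ + τ * ω}) :
    Convex ℝ (S₁ ×ˢ S₂) := by
  have hS₁c : Convex ℝ S₁ := by
    subst hS₁
    rintro p ⟨ψ₁, h₁, u₁, hu₁, rfl⟩ q ⟨ψ₂, h₂, u₂, hu₂, rfl⟩ s t hs ht hst
    have huU : s • u₁ + t • u₂ ∈ U := hU hu₁ hu₂ hs ht hst
    have key : ∃ ψ ∈ Set.Icc a b,
        C₂ ψ (s • u₁ + t • u₂) = s * C₂ ψ₁ u₁ + t * C₂ ψ₂ u₂ := by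
      rcases le_total ψ₁ ψ₂ with h12 | h21
      · exact prop1_ivt_aux n a b U C₂ hcont hmono ψ₁ ψ₂ h₁ h₂ h12 u₁ u₂ hu₁ hu₂
          s t hs ht hst
      · obtain ⟨ψ, hψ, hval⟩ := prop1_ivt_aux n a b U C₂ hcont hmono ψ₂ ψ₁ h₂ h₁ h21
          u₂ u₁ hu₂ hu₁ t s ht hs (by linarith)
        refine ⟨ψ, hψ, ?_⟩
        rw [show t • u₂ + s • u₁ = s • u₁ + t • u₂ by abel] at hval
        linarith
    obtain ⟨ψ, hψ, hval⟩ := key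
    refine ⟨ψ, hψ, s • u₁ + t • u₂, huU, ?_⟩
    have hx : s • (x₀ + τ • C₁ u₁) + t • (x₀ + τ • C₁ u₂)
        = x₀ + τ • C₁ (s • u₁ + t • u₂) := by
      funext i
      simp only [map_add, map_smul, Pi.add_apply, Pi.smul_apply, smul_eq_mul]
      linear_combination (x₀ i) * hst
    have hθ : s • (θ₀ + τ * C₂ ψ₁ u₁) + t • (θ₀ + τ * C₂ ψ₂ u₂)
        = θ₀ + τ * C₂ ψ (s • u₁ + t • u₂) := by
      rw [hval]; simp only [smul_eq_mul]; linear_combination θ₀ * hst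
    exact Prod.ext (by simpa using hx) (by simpa using hθ)
  have hS₂c : Convex ℝ S₂ := by
    subst hS₂
    rintro p ⟨ψ₁, h₁, ω₁, hω₁, rfl⟩ q ⟨ψ₂, h₂, ω₂, hω₂, rfl⟩ s t hs ht hst
    refine ⟨s * ψ₁ + t * ψ₂, convex_Icc a b h₁ h₂ hs ht hst,
      s * ω₁ + t * ω₂, convex_Icc c d hω₁ hω₂ hs ht hst, ?_⟩
    simp only [smul_eq_mul]; ring
  exact hS₁c.prod hS₂c
end

section
/- Let a ≤ b be real numbers, let U ⊆ ℝⁿ be a convex set, let C₁ : ℝⁿ → ℝᵐ be a linear map, and let C₂ : ℝ → (ℝⁿ → ℝ) assign to each ψ ∈ ℝ a linear functional on ℝⁿ such that for every u ∈ U the scalar map ψ ↦ C₂(ψ)(u) is continuous and monotone nondecreasing on [a, b]. Then the set S₁ = { (C₁(u), C₂(ψ)(u)) : ψ ∈ [a, b], u ∈ U } ⊆ ℝᵐ × ℝ is convex. -/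
/-- Key step in Proposition 1: the union over ψ ∈ [a,b] of the images of the
convex input set `U` under `u ↦ (C₁ u, C₂ ψ u)` is convex. -/
theorem union_of_linear_images_convex
    (n m : ℕ) (a b : ℝ) (hab : a ≤ b)
    (U : Set (Fin n → ℝ)) (hU : Convex ℝ U)
    (C₁ : (Fin n → ℝ) →ₗ[ℝ] (Fin m → ℝ))
    (C₂ : ℝ → ((Fin n → ℝ) →ₗ[ℝ] ℝ))
    (hcont : ∀ u ∈ U, ContinuousOn (fun ψ => C₂ ψ u) (Set.Icc a b))
    (hmono : ∀ u ∈ U, MonotoneOn (fun ψ => C₂ ψ u) (Set.Icc a b)) :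
    Convex ℝ {p : (Fin m → ℝ) × ℝ | ∃ ψ ∈ Set.Icc a b, ∃ u ∈ U,
      p = (C₁ u, C₂ ψ u)} := by
  rintro p ⟨ψ₁, hψ₁, u₁, hu₁, rfl⟩ q ⟨ψ₂, hψ₂, u₂, hu₂, rfl⟩ s t hs ht hst
  set u := s • u₁ + t • u₂ with hu
  have humem : u ∈ U := hU hu₁ hu₂ hs ht hst
  have hc : ContinuousOn (fun ψ => C₂ ψ u) (Set.Icc a b) := hcont u humem
  have hfval : ∀ ψ, C₂ ψ u = s * C₂ ψ u₁ + t * C₂ ψ u₂ := by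
    intro ψ; simp [hu, map_add, map_smul, smul_eq_mul]
  set v := s * C₂ ψ₁ u₁ + t * C₂ ψ₂ u₂ with hv
  have key : ∃ ψ ∈ Set.Icc a b, C₂ ψ u = v := by
    rcases le_total ψ₁ ψ₂ with h | h
    · have h1 : C₂ ψ₁ u ≤ v := by
        rw [hfval]
        have := hmono u₂ hu₂ hψ₁ hψ₂ h
        nlinarith
      have h2 : v ≤ C₂ ψ₂ u := by
        rw [hfval]
        have := hmono u₁ hu₁ hψ₁ hψ₂ h
        nlinarith
      have hsub : Set.Icc ψ₁ ψ₂ ⊆ Set.Icc a b := Set.Icc_subset_Icc hψ₁.1 hψ₂.2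
      obtain ⟨ψ, hψ, hval⟩ := intermediate_value_Icc h (hc.mono hsub) ⟨h1, h2⟩
      exact ⟨ψ, hsub hψ, hval⟩
    · have h1 : C₂ ψ₂ u ≤ v := by
        rw [hfval]
        have := hmono u₁ hu₁ hψ₂ hψ₁ h
        nlinarith
      have h2 : v ≤ C₂ ψ₁ u := by
        rw [hfval]
        have := hmono u₂ hu₂ hψ₂ hψ₁ h
        nlinarith
      have hsub : Set.Icc ψ₂ ψ₁ ⊆ Set.Icc a b := Set.Icc_subset_Icc hψ₂.1 hψ₁.2
      obtain ⟨ψ, hψ, hval⟩ := intermediate_value_Icc h (hc.mono hsub) ⟨h1, h2⟩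
      exact ⟨ψ, hsub hψ, hval⟩
  obtain ⟨ψ, hψ, hval⟩ := key
  refine ⟨ψ, hψ, u, humem, ?_⟩
  have h₁ : C₁ u = s • C₁ u₁ + t • C₁ u₂ := by simp [hu, map_add, map_smul]
  apply Prod.ext
  · simp [h₁]
  · simp [hval, hv, smul_eq_mul]
end
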